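/- arXiv:2011.08882 — 5 statements merged into one kernel-verified Lean document; each statement's English description precedes it below -/
import Mathlib

section
/- Let Σ = ℝ \ {0} and Υ the equivalence relation on Σ whose three classes are Y₁ = {-1} ∪ (0,1) ∪ (1,2) ∪ (3,∞), Y₂ = ((-∞,0) \ {-1}) ∪ {1}, and Y₃ = [2,3]. Then any two nonempty open Υ-saturated subsets of Σ have nonempty intersection, yet Y₁ ∪ Y₂ is a nonempty open Υ-saturated subset of Σ that is not dense in Σ. -/
/-- The space `Σ = ℝ \ {0}` with its subspace topology. -/
abbrev Sig : Type := {x : ℝ // x ≠ 0}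

/-- The class `Y₁ = {-1} ∪ (0,1) ∪ (1,2) ∪ (3,∞)`. -/
def Y1 : Set Sig :=
  {σ | σ.val = -1 ∨ (0 < σ.val ∧ σ.val < 1) ∨ (1 < σ.val ∧ σ.val < 2) ∨ 3 < σ.val}

/-- The class `Y₂ = ((-∞,0) \ {-1}) ∪ {1}`. -/
def Y2 : Set Sig := {σ | (σ.val < 0 ∧ σ.val ≠ -1) ∨ σ.val = 1}

/-- The class `Y₃ = [2,3]`. -/
def Y3 : Set Sig := {σ | 2 ≤ σ.val ∧ σ.val ≤ 3}

/-- The equivalence relation `Υ` with classes `Y₁`, `Y₂` and `Y₃`. -/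
def UpsRel (x y : Sig) : Prop :=
  (x ∈ Y1 ∧ y ∈ Y1) ∨ (x ∈ Y2 ∧ y ∈ Y2) ∨ (x ∈ Y3 ∧ y ∈ Y3)

lemma halfY1 : (⟨1/2, by norm_num⟩ : Sig) ∈ Y1 := Or.inr (Or.inl ⟨by norm_num, by norm_num⟩)

lemma cover (x : Sig) : x ∈ Y1 ∨ x ∈ Y2 ∨ x ∈ Y3 := by
  have hx0 := x.2
  rcases lt_trichotomy x.val 0 with h|h|h
  · by_cases h1 : x.val = -1
    · exact Or.inl (Or.inl h1)
    · exact Or.inr (Or.inl (Or.inl ⟨h, h1⟩))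
  · exact absurd h hx0
  · rcases lt_trichotomy x.val 1 with h1|h1|h1
    · exact Or.inl (Or.inr (Or.inl ⟨h, h1⟩))
    · exact Or.inr (Or.inl (Or.inr h1))
    · rcases lt_trichotomy x.val 2 with h2|h2|h2
      · exact Or.inl (Or.inr (Or.inr (Or.inl ⟨h1, h2⟩)))
      · exact Or.inr (Or.inr ⟨le_of_eq h2.symm, by rw [h2]; norm_num⟩)
      · rcases le_or_gt x.val 3 with h3|h3
        · exact Or.inr (Or.inr ⟨le_of_lt h2, h3⟩)
        · exact Or.inl (Or.inr (Or.inr (Or.inr h3)))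

lemma key (U : Set Sig) (hU : IsOpen U) (hne : U.Nonempty)
    (hsat : ∀ x ∈ U, ∀ y : Sig, UpsRel x y → y ∈ U) :
    (⟨1/2, by norm_num⟩ : Sig) ∈ U := by
  obtain ⟨x, hx⟩ := hne
  rw [Metric.isOpen_iff] at hU
  rcases cover x with h1 | h2 | h3
  · exact hsat x hx _ (Or.inl ⟨h1, halfY1⟩)
  · -- 1 ∈ U
    have hone : (⟨1, by norm_num⟩ : Sig) ∈ U :=
      hsat x hx _ (Or.inr (Or.inl ⟨h2, Or.inr rfl⟩))
    obtain ⟨ε, hε, hball⟩ := hU _ hone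
    set δ := min (ε/2) (1/2) with hδ
    have hδ0 : 0 < δ := lt_min (by linarith) (by norm_num)
    have hδ1 : δ ≤ 1/2 := min_le_right _ _
    have hp : (⟨1 + δ, by nlinarith⟩ : Sig) ∈ U := by
      apply hball
      simp only [Metric.mem_ball, Subtype.dist_eq, Real.dist_eq]
      rw [abs_of_pos (by linarith)]
      have : δ ≤ ε/2 := min_le_left _ _
      linarith
    exact hsat _ hp _ (Or.inl ⟨Or.inr (Or.inr (Or.inl ⟨by linarith, by linarith⟩)), halfY1⟩)
  · have htwo : (⟨2, by norm_num⟩ : Sig) ∈ U :=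
      hsat x hx _ (Or.inr (Or.inr ⟨h3, ⟨by norm_num, by norm_num⟩⟩))
    obtain ⟨ε, hε, hball⟩ := hU _ htwo
    set δ := min (ε/2) (1/2) with hδ
    have hδ0 : 0 < δ := lt_min (by linarith) (by norm_num)
    have hδ1 : δ ≤ 1/2 := min_le_right _ _
    have hp : (⟨2 - δ, by nlinarith⟩ : Sig) ∈ U := by
      apply hball
      simp only [Metric.mem_ball, Subtype.dist_eq, Real.dist_eq]
      rw [show (2:ℝ) - δ - 2 = -δ by ring, abs_neg, abs_of_pos hδ0]
      have : δ ≤ ε/2 := min_le_left _ _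
      linarith
    exact hsat _ hp _ (Or.inl ⟨Or.inr (Or.inr (Or.inl ⟨by linarith, by linarith⟩)), halfY1⟩)

/-- Any two nonempty open `Υ`-saturated subsets of `Σ = ℝ \ {0}` intersect, but
`Y₁ ∪ Y₂` is a nonempty open saturated set which is not dense. -/
theorem stmt2 :
    (∀ U V : Set Sig, IsOpen U → IsOpen V → U.Nonempty → V.Nonempty →
      (∀ x ∈ U, ∀ y : Sig, UpsRel x y → y ∈ U) →
      (∀ x ∈ V, ∀ y : Sig, UpsRel x y → y ∈ V) →
      (U ∩ V).Nonempty) ∧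
    (Y1 ∪ Y2).Nonempty ∧ IsOpen (Y1 ∪ Y2) ∧
    (∀ x ∈ Y1 ∪ Y2, ∀ y : Sig, UpsRel x y → y ∈ Y1 ∪ Y2) ∧
    ¬ Dense (Y1 ∪ Y2) := by
  refine ⟨?_, ?_, ?_, ?_, ?_⟩
  · intro U V hU hV hUne hVne hUsat hVsat
    exact ⟨_, key U hU hUne hUsat, key V hV hVne hVsat⟩
  · exact ⟨_, Or.inl halfY1⟩
  · have heq : Y1 ∪ Y2 = Subtype.val ⁻¹' (Set.Iio 2 ∪ Set.Ioi 3) := by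
      ext σ
      constructor
      · rintro (h | h)
        · rcases h with h | ⟨_, h⟩ | ⟨_, h⟩ | h
          · exact Or.inl (by simp [Set.mem_Iio]; linarith)
          · exact Or.inl (by simp [Set.mem_Iio]; linarith)
          · exact Or.inl (by simp [Set.mem_Iio]; linarith)
          · exact Or.inr (by simpa using h)
        · rcases h with ⟨h, _⟩ | h
          · exact Or.inl (by simp [Set.mem_Iio]; linarith)
          · exact Or.inl (by simp [Set.mem_Iio]; linarith [h])
      · intro h
        rcases cover σ with h1 | h2 | h3
        · exact Or.inl h1
        · exact Or.inr h2
        · exfalso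
          rcases h with h | h
          · simp [Set.mem_Iio] at h; linarith [h3.1]
          · simp [Set.mem_Ioi] at h; linarith [h3.2]
    rw [heq]
    exact ((isOpen_Iio.union isOpen_Ioi)).preimage continuous_subtype_val
  · rintro x hx y (⟨_, hy⟩ | ⟨_, hy⟩ | ⟨hx3, _⟩)
    · exact Or.inl hy
    · exact Or.inr hy
    · exfalso
      rcases hx with h | h
      · rcases h with h | ⟨_, h⟩ | ⟨_, h⟩ | h
        · linarith [hx3.1]
        · linarith [hx3.1]
        · linarith [hx3.1]
        · linarith [hx3.2]
      · rcases h with ⟨h, _⟩ | h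
        · linarith [hx3.1]
        · linarith [hx3.1, h.le, h.ge]
  · intro hd
    have h := hd (⟨5/2, by norm_num⟩ : Sig)
    rw [Metric.mem_closure_iff] at h
    obtain ⟨y, hy, hdist⟩ := h (1/2) (by norm_num)
    rw [Subtype.dist_eq, Real.dist_eq] at hdist
    rw [abs_lt] at hdist
    rcases hy with h | h
    · rcases h with h | ⟨_, h⟩ | ⟨_, h⟩ | h
      all_goals simp at h; linarith [hdist.1, hdist.2]
    · rcases h with ⟨h, _⟩ | h
      · linarith [hdist.1, hdist.2]
      · rw [h] at hdist; linarith [hdist.1]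
end

section
/- Let G be a non-compact Hausdorff topological group acting continuously on a Hausdorff topological space Σ, and let σ ∈ Σ have relatively compact orbit (closure(O(σ)) is compact). Then L(σ) is nonempty, and L(σ) attracts σ: for every open set W ⊇ L(σ) there exists a compact set K ⊆ G such that g•σ ∈ W for every g ∈ G \ K. -/
open Set MulAction Pointwise

/-- The recurrence set `Rec(M,N) = {g ∈ G ∣ (g•M) ∩ N ≠ ∅}`. -/
def RecSet (G : Type*) {A : Type*} [SMul G A] (M N : Set A) : Set G :=
  {g : G | ((g • M) ∩ N).Nonempty}

/-- A subset `S` of a topological group is syndetic if `K·S = G` for some compact `K`. -/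
def Syndetic {G : Type*} [Mul G] [TopologicalSpace G] (S : Set G) : Prop :=
  ∃ K : Set G, IsCompact K ∧ K * S = Set.univ

/-- The limit set `L(σ) = ⋂_{K ⊆ G compact} closure {g•σ ∣ g ∈ G \ K}`. -/
def LimitSet (G : Type*) {A : Type*} [TopologicalSpace G] [TopologicalSpace A] [SMul G A]
    (σ : A) : Set A :=
  ⋂ (K : Set G) (_ : IsCompact K), closure ((fun g : G => g • σ) '' Kᶜ)

/-- The set of fixed points of the action. -/
def FixPts (G A : Type*) [SMul G A] : Set A := {σ | ∀ g : G, g • σ = σ}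

/-- The set of periodic points: those whose stabilizer is syndetic. -/
def PerPts (G A : Type*) [Mul G] [TopologicalSpace G] [SMul G A] : Set A :=
  {σ | Syndetic {g : G | g • σ = σ}}

/-- The set of weakly periodic points: those whose stabilizer is not compact. -/
def WPerPts (G A : Type*) [TopologicalSpace G] [SMul G A] : Set A :=
  {σ | ¬ IsCompact {g : G | g • σ = σ}}

/-- The set of almost periodic points: `Rec({σ},U)` is syndetic for every neighborhood
`U` of `σ`. -/
def APerPts (G A : Type*) [Mul G] [TopologicalSpace G] [TopologicalSpace A] [SMul G A] :
    Set A :=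
  {σ | ∀ U ∈ nhds σ, Syndetic {g : G | g • σ ∈ U}}

/-- The set of recurrent points: `σ ∈ L(σ)`. -/
def RecPts (G A : Type*) [TopologicalSpace G] [TopologicalSpace A] [SMul G A] : Set A :=
  {σ | σ ∈ LimitSet G σ}

/-- The set of non-wandering points: `Rec(W,W)` is not relatively compact for any
neighborhood `W` of `σ`. -/
def NWPts (G A : Type*) [TopologicalSpace G] [TopologicalSpace A] [SMul G A] : Set A :=
  {σ | ∀ W ∈ nhds σ, ¬ IsCompact (closure (RecSet G W W))}

open Filter Topology

/-!
The limit set is the set of cluster points of `g ↦ g • σ` along the cocompact filter of `G`,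
which is nontrivial since `G` is not compact. As this map sends the cocompact filter into the
compact set `closure (orbit G σ)`, the image filter has a cluster point, and it eventually enters every
open set containing all of its cluster points.
-/

section LimitSet

variable (G : Type*) {A : Type*} [TopologicalSpace G] [TopologicalSpace A] [SMul G A]

theorem limitSet_eq_setOf_mapClusterPt (σ : A) :
    LimitSet G σ = {x | MapClusterPt x (cocompact G) (fun g : G => g • σ)} := by
  ext x
  simp only [LimitSet, mem_iInter, mem_ofPred_eq, MapClusterPt,
    (hasBasis_cocompact.map _).clusterPt_iff_forall_mem_closure]

theorem map_smul_cocompact_le_closure_orbit (σ : A) :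
    map (fun g : G => g • σ) (cocompact G) ≤ 𝓟 (closure (orbit G σ)) :=
  tendsto_principal.2 <| .of_forall fun g => subset_closure (mem_orbit σ g)

variable {G}

theorem limitSet_nonempty_of_isCompact_closure_orbit [NoncompactSpace G] {σ : A}
    (horb : IsCompact (closure (orbit G σ))) : (LimitSet G σ).Nonempty := by
  obtain ⟨x, -, hx⟩ := horb (map_smul_cocompact_le_closure_orbit G σ)
  exact ⟨x, (limitSet_eq_setOf_mapClusterPt G σ).symm ▸ hx⟩

theorem eventually_cocompact_smul_mem_of_limitSet_subset {σ : A}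
    (horb : IsCompact (closure (orbit G σ))) {W : Set A} (hW : IsOpen W)
    (hLW : LimitSet G σ ⊆ W) : ∀ᶠ g in cocompact G, g • σ ∈ W :=
  horb.adherence_nhdset (map_smul_cocompact_le_closure_orbit G σ) hW fun _ _ hx =>
    hLW <| (limitSet_eq_setOf_mapClusterPt G σ).symm ▸ hx

end LimitSet

theorem stmt10_general {G A : Type*} [Group G] [TopologicalSpace G]
    [TopologicalSpace A] [MulAction G A]
    (hG : ¬ CompactSpace G) (σ : A)
    (horb : IsCompact (closure (MulAction.orbit G σ))) :
    (LimitSet G σ).Nonempty ∧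
    ∀ W : Set A, IsOpen W → LimitSet G σ ⊆ W →
      ∃ K : Set G, IsCompact K ∧ ∀ g : G, g ∉ K → g • σ ∈ W := by
  have : NoncompactSpace G := not_compactSpace_iff.1 hG
  refine ⟨limitSet_nonempty_of_isCompact_closure_orbit horb, fun W hW hLW => ?_⟩
  obtain ⟨K, hK, hKW⟩ := hasBasis_cocompact.eventually_iff.1
    (eventually_cocompact_smul_mem_of_limitSet_subset horb hW hLW)
  exact ⟨K, hK, fun g hg => hKW hg⟩

/-- If the orbit of `σ` is relatively compact, then `L(σ)` is nonempty and attracts `σ`: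
for every open `W ⊇ L(σ)` there is a compact `K ⊆ G` with `g•σ ∈ W` for all
`g ∈ G \ K`. -/
theorem stmt10 {G A : Type*} [Group G] [TopologicalSpace G] [IsTopologicalGroup G] [T2Space G]
    [TopologicalSpace A] [T2Space A] [MulAction G A] [ContinuousSMul G A]
    (hG : ¬ CompactSpace G) (σ : A)
    (horb : IsCompact (closure (MulAction.orbit G σ))) :
    (LimitSet G σ).Nonempty ∧
    ∀ W : Set A, IsOpen W → LimitSet G σ ⊆ W →
      ∃ K : Set G, IsCompact K ∧ ∀ g : G, g ∉ K → g • σ ∈ W :=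
  stmt10_general hG σ horb
end

section
/- Let G be a non-compact, locally compact Hausdorff topological group acting continuously on a Hausdorff topological space Σ, and let σ ∈ Σ. Then the following are equivalent: (a) O(σ) ∩ L(σ) ≠ ∅; (b) L(σ) = closure(O(σ)); (c) σ ∈ L(σ); (d) for every open neighborhood U of σ the set Rec({σ},U) = {g ∈ G | g•σ ∈ U} is not relatively compact in G. -/
open Set MulAction Pointwise

/-! The limit set is closed and `G`-invariant, and lies in the orbit closure; so once `σ` lies in
it, it contains the whole orbit closure. A point `x` lies in `L(σ)` exactly when no neighbourhood
`U` of `x` has `{g ∣ g • σ ∈ U}` inside a compact set; as closures of compact sets in a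
topological group are compact, for `x = σ` this is condition (d). -/

section SMul

variable {G A : Type*} [TopologicalSpace G] [TopologicalSpace A] [SMul G A] {σ x : A}

theorem mem_limitSet_iff :
    x ∈ LimitSet G σ ↔ ∀ K : Set G, IsCompact K → x ∈ closure ((· • σ) '' Kᶜ) := by
  simp only [LimitSet, mem_iInter]

theorem isClosed_limitSet : IsClosed (LimitSet G σ) :=
  isClosed_biInter fun _ _ => isClosed_closure

theorem mem_limitSet_iff_forall_isOpen :
    x ∈ LimitSet G σ ↔
      ∀ U : Set A, IsOpen U → x ∈ U → ∀ K : Set G, IsCompact K → ¬ {g : G | g • σ ∈ U} ⊆ K := by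
  simp only [mem_limitSet_iff, mem_closure_iff, ← not_disjoint_iff_nonempty_inter,
    disjoint_image_right, disjoint_compl_right_iff_subset]
  exact ⟨fun h U hU hx K hK => h K hK U hU hx, fun h K hK U hU hx => h U hU hx K hK⟩

theorem mem_limitSet_iff_not_isCompact_closure [R1Space G] :
    x ∈ LimitSet G σ ↔
      ∀ U : Set A, IsOpen U → x ∈ U → ¬ IsCompact (closure {g : G | g • σ ∈ U}) := by
  rw [mem_limitSet_iff_forall_isOpen]
  refine forall₃_congr fun U _ _ => ⟨fun h hc => h _ hc subset_closure, ?_⟩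
  exact fun h K hK hsub => h (hK.closure_of_subset hsub)

end SMul

theorem limitSet_subset_closure_orbit {G A : Type*} [Monoid G] [TopologicalSpace G]
    [TopologicalSpace A] [MulAction G A] {σ : A} : LimitSet G σ ⊆ closure (orbit G σ) :=
  fun _ hx => by simpa [orbit] using mem_limitSet_iff.1 hx ∅ isCompact_empty

section Group

variable {G A : Type*} [Group G] [TopologicalSpace G] [ContinuousConstSMul G G]
  [TopologicalSpace A] [MulAction G A] [ContinuousConstSMul G A] {σ x : A}

theorem smul_mem_limitSet (g : G) (hx : x ∈ LimitSet G σ) : g • x ∈ LimitSet G σ := by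
  rw [mem_limitSet_iff] at hx ⊢
  intro K hK
  refine closure_mono ?_ (image_closure_subset_closure_image (continuous_const_smul g)
    (mem_image_of_mem _ (hx _ (hK.smul g⁻¹))))
  rintro _ ⟨_, ⟨h, hh, rfl⟩, rfl⟩
  refine ⟨g * h, fun hgh => hh ?_, (smul_smul g h σ).symm⟩
  rwa [mem_smul_set_iff_inv_smul_mem, inv_inv, smul_eq_mul]

theorem smul_mem_limitSet_iff (g : G) : g • x ∈ LimitSet G σ ↔ x ∈ LimitSet G σ :=
  ⟨fun h => inv_smul_smul g x ▸ smul_mem_limitSet g⁻¹ h, smul_mem_limitSet g⟩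

theorem limitSet_eq_closure_orbit (hσ : σ ∈ LimitSet G σ) :
    LimitSet G σ = closure (orbit G σ) := by
  refine limitSet_subset_closure_orbit.antisymm (closure_minimal ?_ isClosed_limitSet)
  rintro _ ⟨g, rfl⟩
  exact smul_mem_limitSet g hσ

end Group

theorem stmt11_general {G A : Type*} [Group G] [TopologicalSpace G] [IsTopologicalGroup G]
    [TopologicalSpace A] [MulAction G A] [ContinuousSMul G A]
    (σ : A) :
    List.TFAE
      [(MulAction.orbit G σ ∩ LimitSet G σ).Nonempty,
        LimitSet G σ = closure (MulAction.orbit G σ),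
        σ ∈ LimitSet G σ,
        ∀ U : Set A, IsOpen U → σ ∈ U → ¬ IsCompact (closure {g : G | g • σ ∈ U})] := by
  tfae_have 1 → 3 := by
    rintro ⟨_, ⟨g, rfl⟩, hg⟩
    exact (smul_mem_limitSet_iff g).1 hg
  tfae_have 3 → 2 := limitSet_eq_closure_orbit
  tfae_have 2 → 1 := fun h => ⟨σ, mem_orbit_self σ, h ▸ subset_closure (mem_orbit_self σ)⟩
  tfae_have 3 ↔ 4 := mem_limitSet_iff_not_isCompact_closure
  tfae_finish

/-- For a continuous action of a non-compact, locally compact Hausdorff topological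
group, the following are equivalent: (a) `O(σ) ∩ L(σ) ≠ ∅`; (b) `L(σ) = closure(O(σ))`;
(c) `σ ∈ L(σ)`; (d) `Rec({σ},U)` is not relatively compact for any open neighborhood
`U` of `σ`. -/
theorem stmt11 {G A : Type*} [Group G] [TopologicalSpace G] [IsTopologicalGroup G] [T2Space G]
    [LocallyCompactSpace G]
    [TopologicalSpace A] [T2Space A] [MulAction G A] [ContinuousSMul G A]
    (hG : ¬ CompactSpace G) (σ : A) :
    List.TFAE
      [(MulAction.orbit G σ ∩ LimitSet G σ).Nonempty,
        LimitSet G σ = closure (MulAction.orbit G σ),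
        σ ∈ LimitSet G σ,
        ∀ U : Set A, IsOpen U → σ ∈ U → ¬ IsCompact (closure {g : G | g • σ ∈ U})] :=
  stmt11_general σ
end

section
/- Let G be a non-compact Hausdorff topological group acting continuously on a compact Hausdorff topological space Σ. Then the non-wandering set Σ_nw attracts every point of Σ: for every σ ∈ Σ and every open set V ⊇ Σ_nw there exists a compact set K ⊆ G such that g•σ ∈ V for every g ∈ G \ K. -/
open Set MulAction Pointwise

open Filter

/-!
Every cluster point `τ` of `g ↦ g • σ` along the cocompact filter is non-wandering: if
`g₀ • σ ∈ W` and `g • σ ∈ W` for `g` outside any prescribed compact set, then `g g₀⁻¹ ∈ Rec(W, W)`,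
and right translation by `g₀⁻¹` is proper, so `Rec(W, W)` is not relatively compact. In a compact
space a filter is eventually in every open set containing all of its cluster points.
-/

lemma not_isCompact_closure_of_frequently_cocompact {X : Type*} [TopologicalSpace X] {S : Set X}
    (h : ∃ᶠ x in cocompact X, x ∈ S) : ¬ IsCompact (closure S) := fun hS =>
  h (mem_of_superset hS.compl_mem_cocompact fun _ hx hxS => hx (subset_closure hxS))

lemma frequently_mem_recSet_of_frequently_smul_mem {G A : Type*} [Group G] [TopologicalSpace G]
    [SeparatelyContinuousMul G] [MulAction G A] {σ : A} {W : Set A}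
    (h : ∃ᶠ g in cocompact G, g • σ ∈ W) : ∃ᶠ g in cocompact G, g ∈ RecSet G W W := by
  obtain ⟨g₀, hg₀⟩ := h.exists
  refine (tendsto_cocompact_mul_right (inv_mul_cancel g₀)).frequently (h.mono fun g hg => ?_)
  refine ⟨g • σ, ⟨g₀ • σ, hg₀, ?_⟩, hg⟩
  simp only [smul_smul, inv_mul_cancel_right]

lemma mem_nwPts_of_mapClusterPt {G A : Type*} [Group G] [TopologicalSpace G]
    [SeparatelyContinuousMul G] [TopologicalSpace A] [MulAction G A] {σ τ : A}
    (h : MapClusterPt τ (cocompact G) (· • σ)) : τ ∈ NWPts G A := fun W hW =>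
  not_isCompact_closure_of_frequently_cocompact <|
    frequently_mem_recSet_of_frequently_smul_mem (mapClusterPt_iff_frequently.1 h W hW)

theorem stmt14_general {G A : Type*} [Group G] [TopologicalSpace G] [IsTopologicalGroup G]
    [TopologicalSpace A] [CompactSpace A] [MulAction G A]
    (σ : A) (V : Set A) (hV : IsOpen V) (hnw : NWPts G A ⊆ V) :
    ∃ K : Set G, IsCompact K ∧ ∀ g : G, g ∉ K → g • σ ∈ V := by
  have hV_mem : V ∈ map (· • σ) (cocompact G) :=
    isCompact_univ.adherence_nhdset (le_principal_iff.2 univ_mem) hV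
      fun _ _ hτ => hnw (mem_nwPts_of_mapClusterPt hτ)
  exact hasBasis_cocompact.eventually_iff.1 hV_mem

/-- If `A` is compact, the non-wandering set attracts every point: for each `σ` and each
open `V ⊇ Σ_nw` there is a compact `K ⊆ G` with `g•σ ∈ V` for all `g ∈ G \ K`. -/
theorem stmt14 {G A : Type*} [Group G] [TopologicalSpace G] [IsTopologicalGroup G] [T2Space G]
    [TopologicalSpace A] [T2Space A] [CompactSpace A] [MulAction G A] [ContinuousSMul G A]
    (hG : ¬ CompactSpace G) (σ : A) (V : Set A) (hV : IsOpen V) (hnw : NWPts G A ⊆ V) :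
    ∃ K : Set G, IsCompact K ∧ ∀ g : G, g ∉ K → g • σ ∈ V :=
  stmt14_general σ V hV hnw
end

section
/- Let G be a locally compact Hausdorff topological group acting continuously on a locally compact Hausdorff topological space Σ. A point σ ∈ Σ is almost periodic if and only if the orbit closure closure(O(σ)) is compact and minimal. -/
open Set MulAction Pointwise

/-!
Both conditions are equivalent to the recurrence property "every `τ` in the orbit closure of
`σ` has `σ` in its own orbit closure", which is a reformulation of minimality. If
`Rec({σ}, U)` is syndetic, say `K · Rec({σ}, U) = G` with `U` a compact neighbourhood, then the
orbit of `σ` lies in the compact set `K • U`; this gives compactness, and writing `τ = k • u`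
brings `k⁻¹ • τ` back into `U`. Conversely, if the orbit closure is compact and every orbit in
it comes back to `interior U`, then finitely many translates `g⁻¹` already suffice to do so,
and they form the compact set exhibiting syndeticity.
-/

open Filter Topology

section Minimality

variable {G A : Type*} [Monoid G] [MulAction G A]

lemma MulAction.orbit_subset_of_smul_subset {N : Set A} {x : A} (hx : x ∈ N)
    (hN : ∀ g : G, g • N ⊆ N) : orbit G x ⊆ N := by
  rintro _ ⟨g, rfl⟩
  exact hN g (smul_mem_smul_set hx)

variable [TopologicalSpace A] [ContinuousConstSMul G A]

lemma closure_orbit_subset_of_mem_closure_orbit {σ τ : A} (hτ : τ ∈ closure (orbit G σ)) :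
    closure (orbit G τ) ⊆ closure (orbit G σ) :=
  closure_minimal (orbit_subset_of_smul_subset hτ (smul_closure_orbit_subset · σ))
    isClosed_closure

lemma closure_orbit_minimal_iff (σ : A) :
    (∀ N : Set A, N ⊆ closure (orbit G σ) → IsClosed N → (∀ g : G, g • N ⊆ N) →
        N.Nonempty → N = closure (orbit G σ)) ↔
      ∀ τ ∈ closure (orbit G σ), σ ∈ closure (orbit G τ) := by
  constructor
  · intro hmin τ hτ
    rw [hmin _ (closure_orbit_subset_of_mem_closure_orbit hτ) isClosed_closure
      (smul_closure_orbit_subset · τ) ⟨τ, subset_closure (mem_orbit_self τ)⟩]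
    exact subset_closure (mem_orbit_self σ)
  · rintro hret N hN hNc hNinv ⟨τ, hτ⟩
    have hσ : σ ∈ N := closure_minimal (orbit_subset_of_smul_subset hτ hNinv) hNc (hret τ (hN hτ))
    exact hN.antisymm (closure_minimal (orbit_subset_of_smul_subset hσ hNinv) hNc)

end Minimality

section AlmostPeriodic

variable {G A : Type*} [Group G] [TopologicalSpace G] [TopologicalSpace A] [MulAction G A]

lemma closure_orbit_subset_smul_of_mem_APerPts [T2Space A] [ContinuousSMul G A] {σ : A}
    (h : σ ∈ APerPts G A) {U : Set A} (hU : U ∈ 𝓝 σ) (hUc : IsCompact U) :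
    ∃ K : Set G, IsCompact K ∧ closure (orbit G σ) ⊆ K • U := by
  obtain ⟨K, hK, hKS⟩ := h U hU
  refine ⟨K, hK, closure_minimal ?_ (hK.smul_set hUc).isClosed⟩
  rintro _ ⟨g, rfl⟩
  obtain ⟨k, hk, s, hs, rfl⟩ : g ∈ K * {g : G | g • σ ∈ U} := hKS ▸ mem_univ g
  exact ⟨k, hk, s • σ, hs, (mul_smul k s σ).symm⟩

variable [T2Space A] [LocallyCompactSpace A] [ContinuousSMul G A] {σ : A}

lemma isCompact_closure_orbit_of_mem_APerPts (h : σ ∈ APerPts G A) :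
    IsCompact (closure (orbit G σ)) := by
  obtain ⟨U, hU, -, hUc⟩ := local_compact_nhds (univ_mem : univ ∈ 𝓝 σ)
  obtain ⟨K, hK, hsub⟩ := closure_orbit_subset_smul_of_mem_APerPts h hU hUc
  exact (hK.smul_set hUc).of_isClosed_subset isClosed_closure hsub

lemma mem_closure_orbit_of_mem_APerPts (h : σ ∈ APerPts G A) {τ : A}
    (hτ : τ ∈ closure (orbit G σ)) : σ ∈ closure (orbit G τ) := by
  refine mem_closure_iff_nhds.2 fun U hU ↦ ?_
  obtain ⟨U', hU', hU'U, hU'c⟩ := local_compact_nhds hU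
  obtain ⟨K, -, hsub⟩ := closure_orbit_subset_smul_of_mem_APerPts h hU' hU'c
  obtain ⟨k, -, u, hu, rfl⟩ := hsub hτ
  exact ⟨u, hU'U hu, k⁻¹, inv_smul_smul k u⟩

end AlmostPeriodic

lemma mem_APerPts_of_isCompact_closure_orbit {G A : Type*} [Group G] [TopologicalSpace G]
    [TopologicalSpace A] [MulAction G A] [ContinuousConstSMul G A] {σ : A}
    (hc : IsCompact (closure (orbit G σ)))
    (hret : ∀ τ ∈ closure (orbit G σ), σ ∈ closure (orbit G τ)) : σ ∈ APerPts G A := by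
  intro U hU
  have hcover : closure (orbit G σ) ⊆ ⋃ g : G, (g • ·) ⁻¹' interior U := by
    intro τ hτ
    obtain ⟨_, hV, g, rfl⟩ := mem_closure_iff_nhds.1 (hret τ hτ) (interior U)
      (isOpen_interior.mem_nhds (mem_interior_iff_mem_nhds.2 hU))
    exact mem_iUnion.2 ⟨g, hV⟩
  obtain ⟨t, ht⟩ := hc.elim_finite_subcover _
    (fun g ↦ isOpen_interior.preimage (continuous_const_smul g)) hcover
  refine ⟨(t : Set G)⁻¹, t.finite_toSet.inv.isCompact, eq_univ_of_forall fun h ↦ ?_⟩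
  obtain ⟨g, hg, hgV⟩ := mem_iUnion₂.1 (ht (subset_closure (mem_orbit σ h)))
  have hgh : (g * h) • σ ∈ U := interior_subset (by rw [mul_smul]; exact hgV)
  exact ⟨g⁻¹, inv_mem_inv.2 hg, g * h, hgh, inv_mul_cancel_left g h⟩

theorem stmt17_general {G A : Type*} [Group G] [TopologicalSpace G]
    [TopologicalSpace A] [T2Space A] [LocallyCompactSpace A]
    [MulAction G A] [ContinuousSMul G A] (σ : A) :
    σ ∈ APerPts G A ↔
      (IsCompact (closure (MulAction.orbit G σ)) ∧
        ∀ N : Set A, N ⊆ closure (MulAction.orbit G σ) → IsClosed N →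
          (∀ g : G, g • N ⊆ N) → N.Nonempty → N = closure (MulAction.orbit G σ)) := by
  rw [closure_orbit_minimal_iff]
  exact ⟨fun h ↦ ⟨isCompact_closure_orbit_of_mem_APerPts h,
      fun _ ↦ mem_closure_orbit_of_mem_APerPts h⟩,
    fun ⟨hc, hret⟩ ↦ mem_APerPts_of_isCompact_closure_orbit hc hret⟩

/-- For a continuous action of a locally compact Hausdorff topological group on a
locally compact Hausdorff space: `σ` is almost periodic iff `closure(O(σ))` is compact
and minimal. -/
theorem stmt17 {G A : Type*} [Group G] [TopologicalSpace G] [IsTopologicalGroup G] [T2Space G]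
    [LocallyCompactSpace G]
    [TopologicalSpace A] [T2Space A] [LocallyCompactSpace A]
    [MulAction G A] [ContinuousSMul G A] (σ : A) :
    σ ∈ APerPts G A ↔
      (IsCompact (closure (MulAction.orbit G σ)) ∧
        ∀ N : Set A, N ⊆ closure (MulAction.orbit G σ) → IsClosed N →
          (∀ g : G, g • N ⊆ N) → N.Nonempty → N = closure (MulAction.orbit G σ)) :=
  stmt17_general σ
end
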